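/- arXiv:1804.05420 — 3 statements merged into one kernel-verified Lean document; each statement's English description precedes it below -/
import Mathlib

section
/- For every permutation σ of {1,…,n} and every weight function w : {1,…,n} → ℝ with w(i) > 0 for all i, the weighted Spearman footrule is at most twice the weighted Kendall tau: S_w(σ) ≤ 2·K_w(σ). -/
open Finset

lemma card_filter_lt_fin {n : ℕ} (i : Fin n) :
    (univ.filter (fun j : Fin n => j < i)).card = (i : ℕ) := by
  rw [← Fin.card_Iio (b := i)]
  congr 1; ext j; simp [Finset.mem_Iio]

lemma key_displacement {n : ℕ} (σ : Equiv.Perm (Fin n)) (i : Fin n) :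
    ((σ i : ℕ) : ℤ) + ((univ.filter (fun j : Fin n => j < i ∧ σ i < σ j)).card : ℤ)
      = ((i : ℕ) : ℤ) + ((univ.filter (fun j : Fin n => i < j ∧ σ j < σ i)).card : ℤ) := by
  set P := univ.filter (fun j : Fin n => σ j < σ i) with hPdef
  set Q := univ.filter (fun j : Fin n => j < i) with hQdef
  have hP : P.card = (σ i : ℕ) := by
    have h : P.card = (univ.filter (fun k : Fin n => k < σ i)).card := by
      apply Finset.card_bij' (fun j _ => σ j) (fun k _ => σ.symm k) <;> simp [hPdef]
    rw [h, card_filter_lt_fin]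
  have hQ : Q.card = (i : ℕ) := card_filter_lt_fin i
  have hA : Q \ P = univ.filter (fun j : Fin n => j < i ∧ σ i < σ j) := by
    ext j
    simp only [Finset.mem_sdiff, hPdef, hQdef, Finset.mem_filter, Finset.mem_univ, true_and,
      not_lt]
    constructor
    · rintro ⟨h1, h2⟩
      refine ⟨h1, lt_of_le_of_ne h2 ?_⟩
      intro h; exact absurd (σ.injective h) (ne_of_gt h1)
    · rintro ⟨h1, h2⟩; exact ⟨h1, le_of_lt h2⟩
  have hB : P \ Q = univ.filter (fun j : Fin n => i < j ∧ σ j < σ i) := by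
    ext j
    simp only [Finset.mem_sdiff, hPdef, hQdef, Finset.mem_filter, Finset.mem_univ, true_and,
      not_lt]
    constructor
    · rintro ⟨h1, h2⟩
      refine ⟨lt_of_le_of_ne h2 ?_, h1⟩
      intro h; subst h; exact lt_irrefl _ h1
    · rintro ⟨h1, h2⟩; exact ⟨h2, le_of_lt h1⟩
  have h1 : (P \ Q).card + Q.card = (P ∪ Q).card := Finset.card_sdiff_add_card P Q
  have h2 : (Q \ P).card + P.card = (Q ∪ P).card := Finset.card_sdiff_add_card Q P
  rw [Finset.union_comm] at h2
  rw [← hA, ← hB, ← hP, ← hQ]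
  omega

lemma abs_disp_le {n : ℕ} (σ : Equiv.Perm (Fin n)) (i : Fin n) :
    |((σ i : ℕ) : ℝ) - ((i : ℕ) : ℝ)| ≤
      ((univ.filter (fun j : Fin n => j < i ∧ σ i < σ j)).card : ℝ) +
       ((univ.filter (fun j : Fin n => i < j ∧ σ j < σ i)).card : ℝ) := by
  have h := key_displacement σ i
  have hr : ((σ i : ℕ) : ℝ) + ((univ.filter (fun j : Fin n => j < i ∧ σ i < σ j)).card : ℝ)
      = ((i : ℕ) : ℝ) + ((univ.filter (fun j : Fin n => i < j ∧ σ j < σ i)).card : ℝ) := by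
    exact_mod_cast congrArg (fun z : ℤ => (z : ℝ)) h
  have ha : (0:ℝ) ≤ ((univ.filter (fun j : Fin n => j < i ∧ σ i < σ j)).card : ℝ) :=
    Nat.cast_nonneg _
  have hb : (0:ℝ) ≤ ((univ.filter (fun j : Fin n => i < j ∧ σ j < σ i)).card : ℝ) :=
    Nat.cast_nonneg _
  rw [abs_le]
  constructor <;> linarith



/-- Weighted Spearman footrule of a permutation `σ` of `{1,…,n}` (compared to the
identity): `S_w(σ) = ∑ i, w i * |σ i - i|`. -/
noncomputable def weightedFootrule {n : ℕ} (w : Fin n → ℝ) (σ : Equiv.Perm (Fin n)) : ℝ :=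
  ∑ i : Fin n, w i * |((σ i : ℕ) : ℝ) - ((i : ℕ) : ℝ)|

/-- Weighted Kendall tau of a permutation `σ` of `{1,…,n}` (compared to the identity):
`K_w(σ) = ∑_{i<j, σ i > σ j} (w i + w j)/2`. -/
noncomputable def weightedKendall {n : ℕ} (w : Fin n → ℝ) (σ : Equiv.Perm (Fin n)) : ℝ :=
  ∑ i : Fin n, ∑ j : Fin n, if i < j ∧ σ j < σ i then (w i + w j) / 2 else 0

/-- For every permutation `σ` of `{1,…,n}` and positive weights `w`,
`S_w(σ) ≤ 2 K_w(σ)`. -/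

theorem weighted_footrule_le_two_mul_kendall (n : ℕ) (σ : Equiv.Perm (Fin n))
    (w : Fin n → ℝ) (hw : ∀ i, 0 < w i) :
    weightedFootrule w σ ≤ 2 * weightedKendall w σ := by
  have hcount : ∀ (P : Fin n → Prop) [DecidablePred P] (c : ℝ),
      ∑ j : Fin n, (if P j then c else 0) = ((univ.filter P).card : ℝ) * c := by
    intro P _ c
    rw [Finset.sum_ite, Finset.sum_const, Finset.sum_const_zero, add_zero, nsmul_eq_mul]
  have h2K : 2 * weightedKendall w σ =
      ∑ i : Fin n, w i * (((univ.filter (fun j : Fin n => j < i ∧ σ i < σ j)).card : ℝ) +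
        ((univ.filter (fun j : Fin n => i < j ∧ σ j < σ i)).card : ℝ)) := by
    unfold weightedKendall
    rw [Finset.mul_sum]
    have step : ∀ i : Fin n,
        2 * ∑ j : Fin n, (if i < j ∧ σ j < σ i then (w i + w j) / 2 else 0)
        = (∑ j : Fin n, (if i < j ∧ σ j < σ i then w i else 0))
          + ∑ j : Fin n, (if i < j ∧ σ j < σ i then w j else 0) := by
      intro i
      rw [Finset.mul_sum, ← Finset.sum_add_distrib]
      refine Finset.sum_congr rfl fun j _ => ?_
      split <;> ring
    simp_rw [step]
    rw [Finset.sum_add_distrib,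
      Finset.sum_comm (s := univ) (t := univ)
        (f := fun i j : Fin n => if i < j ∧ σ j < σ i then w j else 0),
      ← Finset.sum_add_distrib]
    refine Finset.sum_congr rfl fun i _ => ?_
    rw [hcount, hcount, mul_add]
    ring
  rw [h2K]
  unfold weightedFootrule
  refine Finset.sum_le_sum fun i _ => ?_
  exact mul_le_mul_of_nonneg_left (abs_disp_le σ i) (hw i).le
end

section
/- (Diaconis–Graham) For every two permutations σ and π of {1,…,n}, K(σ,π) ≤ S(σ,π) ≤ 2·K(σ,π). -/
/-!
For `i` let `L i` (resp. `R i`) count the `j` that `π` places after (resp. before) `i` while `σ`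
places them before (resp. after) it. Splitting `{j | σ j < σ i}` and `{j | π j < π i}` according
to the other permutation gives `σ i - π i = L i - R i`, and every discordant pair is counted twice
in `∑ i, (L i + R i)`. Hence `S = ∑ |L i - R i| ≤ 2K` and `2K = S + 2 ∑ min (L i) (R i)`.
For `K ≤ S` it remains to see `∑ min (L i) (R i) ≤ S / 2`. The witnesses of the smaller of `L i`
and `R i` all cross the cut at height `π i`, i.e. lie on different sides of it under `π` and `σ`;
as many elements cross a cut upwards as downwards, and the upward crossings of all cuts add up to
`S / 2`.
-/

open Finset

/-- Spearman's footrule between two permutations `σ, π` of `{1,…,n}`: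
`S(σ,π) = ∑ i, |σ i - π i|`. -/
def footrule {n : ℕ} (σ π : Equiv.Perm (Fin n)) : ℕ :=
  ∑ i : Fin n, (((σ i : ℕ) : ℤ) - ((π i : ℕ) : ℤ)).natAbs

/-- Kendall's tau between two permutations `σ, π` of `{1,…,n}`: the number of
discordant pairs `i < j`, i.e. those where exactly one of `σ i < σ j` and
`π i < π j` holds. -/
def kendall {n : ℕ} (σ π : Equiv.Perm (Fin n)) : ℕ :=
  ((Finset.univ ×ˢ Finset.univ).filter fun p : Fin n × Fin n =>
    p.1 < p.2 ∧ ((σ p.1 < σ p.2 ∧ ¬ π p.1 < π p.2) ∨ (π p.1 < π p.2 ∧ ¬ σ p.1 < σ p.2))).card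

theorem Equiv.Perm.card_filter_apply_lt {n : ℕ} (τ : Equiv.Perm (Fin n)) (c : Fin n) :
    #{k | τ k < c} = c := by
  rw [← Fin.card_Iio c]
  exact card_equiv τ fun k => by simp

theorem card_filter_prod_eq_sum {α β : Type*} [Fintype α] [Fintype β] (r : α → β → Prop)
    [∀ a, DecidablePred (r a)] :
    #{p : α × β | r p.1 p.2} = ∑ a, #{b | r a b} := by
  simp only [card_filter, Fintype.sum_prod_type]

theorem two_mul_card_filter_fst_lt_snd {α : Type*} [Fintype α] [LinearOrder α]
    (r : α → α → Prop) [DecidableRel r] (hsymm : ∀ a b, r a b → r b a) (hirrefl : ∀ a, ¬ r a a) :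
    2 * #{p : α × α | p.1 < p.2 ∧ r p.1 p.2} = #{p : α × α | r p.1 p.2} := by
  have hswap : #{p : α × α | p.2 < p.1 ∧ r p.1 p.2} = #{p : α × α | p.1 < p.2 ∧ r p.1 p.2} :=
    card_equiv (Equiv.prodComm α α) fun p => by
      simp only [mem_filter, mem_univ, true_and, Equiv.prodComm_apply, Prod.fst_swap,
        Prod.snd_swap]
      exact and_congr_right fun _ => ⟨hsymm _ _, hsymm _ _⟩
  rw [two_mul]
  nth_rewrite 2 [← hswap]
  rw [← card_union_of_disjoint]
  · congr 1
    ext p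
    simp only [mem_union, mem_filter, mem_univ, true_and]
    constructor
    · rintro (⟨-, h⟩ | ⟨-, h⟩) <;> exact h
    · intro h
      rcases lt_trichotomy p.1 p.2 with hlt | heq | hgt
      · exact Or.inl ⟨hlt, h⟩
      · exact absurd (heq ▸ h) (hirrefl _)
      · exact Or.inr ⟨hgt, h⟩
  · exact disjoint_filter.2 fun p _ h1 h2 => lt_asymm h1.1 h2.1

section

variable {n : ℕ} (σ π : Equiv.Perm (Fin n))

def discordantAfter (i : Fin n) : ℕ :=
  #{j | π i < π j ∧ σ j < σ i}

theorem val_eq_card_add_discordantAfter (i : Fin n) :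
    (σ i : ℕ) = #{j | σ j < σ i ∧ π j < π i} + discordantAfter σ π i := by
  rw [← σ.card_filter_apply_lt (σ i), ← card_filter_add_card_filter_not (fun j => π j < π i),
    filter_filter, filter_filter, discordantAfter]
  congr 2
  ext j
  simp only [mem_filter, mem_univ, true_and]
  constructor
  · rintro ⟨hσ, hπ⟩
    refine ⟨lt_of_le_of_ne (not_lt.1 hπ) fun h => hσ.ne ?_, hσ⟩
    rw [π.injective h]
  · rintro ⟨hπ, hσ⟩
    exact ⟨hσ, hπ.not_gt⟩

theorem val_sub_val_eq_discordantAfter_sub (i : Fin n) :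
    ((σ i : ℕ) : ℤ) - (π i : ℕ) = discordantAfter σ π i - discordantAfter π σ i := by
  have hσ := val_eq_card_add_discordantAfter σ π i
  have hπ := val_eq_card_add_discordantAfter π σ i
  simp only [and_comm (a := π _ < π i)] at hπ
  omega

theorem sum_discordantAfter_add_discordantAfter :
    ∑ i, (discordantAfter σ π i + discordantAfter π σ i) = 2 * kendall σ π := by
  set r : Fin n → Fin n → Prop := fun i j =>
    (π i < π j ∧ σ j < σ i) ∨ (σ i < σ j ∧ π j < π i) with hr
  have hsplit : ∀ i, discordantAfter σ π i + discordantAfter π σ i = #{j | r i j} := fun i => by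
    rw [discordantAfter, discordantAfter, ← card_union_of_disjoint, ← filter_or]
    exact disjoint_filter.2 fun j _ h1 h2 => lt_asymm h1.2 h2.1
  have hkendall : kendall σ π = #{p : Fin n × Fin n | p.1 < p.2 ∧ r p.1 p.2} := by
    refine congrArg card (filter_congr fun p _ => and_congr_right fun hlt => ?_)
    have hne : p.2 ≠ p.1 := hlt.ne'
    simp only [hr, not_lt, (σ.injective.ne hne).le_iff_lt, (π.injective.ne hne).le_iff_lt]
    exact or_comm
  rw [sum_congr rfl fun i _ => hsplit i, ← card_filter_prod_eq_sum, hkendall,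
    two_mul_card_filter_fst_lt_snd]
  · intro a b h
    rcases h with h | h
    · exact Or.inr ⟨h.2, h.1⟩
    · exact Or.inl ⟨h.2, h.1⟩
  · intro a h
    rcases h with h | h <;> exact lt_irrefl _ h.1

theorem footrule_add_two_mul_sum_min :
    footrule σ π + 2 * ∑ i, min (discordantAfter σ π i) (discordantAfter π σ i)
      = 2 * kendall σ π := by
  rw [← sum_discordantAfter_add_discordantAfter, footrule, mul_sum, ← sum_add_distrib]
  refine sum_congr rfl fun i _ => ?_
  have := val_sub_val_eq_discordantAfter_sub σ π i
  omega

def cutCrossings (c : Fin n) : ℕ :=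
  #{k | π k < c ∧ c ≤ σ k}

theorem cutCrossings_comm (c : Fin n) : cutCrossings σ π c = cutCrossings π σ c := by
  have hσ := card_filter_add_card_filter_not (s := {k | σ k < c}) fun k => π k < c
  have hπ := card_filter_add_card_filter_not (s := {k | π k < c}) fun k => σ k < c
  have hboth : #{k | σ k < c ∧ π k < c} = #{k | π k < c ∧ σ k < c} := by simp only [and_comm]
  simp only [filter_filter, σ.card_filter_apply_lt, π.card_filter_apply_lt, not_lt] at hσ hπ
  rw [cutCrossings, cutCrossings]
  omega

theorem sum_cutCrossings : ∑ c, cutCrossings σ π c = ∑ k, ((σ k : ℕ) - π k) := by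
  simp only [cutCrossings, card_filter]
  rw [sum_comm]
  refine sum_congr rfl fun k _ => ?_
  rw [← card_filter, ← Fin.card_Ioc]
  congr 1
  ext c
  simp

theorem footrule_eq_two_mul_sum_cutCrossings :
    footrule σ π = 2 * ∑ c, cutCrossings σ π c := by
  rw [two_mul]
  nth_rewrite 2 [sum_congr rfl fun c _ => cutCrossings_comm σ π c]
  rw [sum_cutCrossings, sum_cutCrossings, ← sum_add_distrib, footrule]
  exact sum_congr rfl fun k _ => by omega

theorem min_discordantAfter_le_cutCrossings (i : Fin n) :
    min (discordantAfter σ π i) (discordantAfter π σ i) ≤ cutCrossings σ π (π i) := by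
  rcases le_total (σ i) (π i) with h | h
  · refine (min_le_left _ _).trans ((card_le_card fun j hj => ?_).trans
      (cutCrossings_comm σ π (π i)).ge)
    simp only [mem_filter, mem_univ, true_and] at hj ⊢
    exact ⟨hj.2.trans_le h, hj.1.le⟩
  · refine (min_le_right _ _).trans (card_le_card fun j hj => ?_)
    simp only [mem_filter, mem_univ, true_and] at hj ⊢
    exact ⟨hj.2, h.trans hj.1.le⟩

theorem sum_min_discordantAfter_le :
    ∑ i, min (discordantAfter σ π i) (discordantAfter π σ i) ≤ ∑ c, cutCrossings σ π c :=
  (sum_le_sum fun i _ => min_discordantAfter_le_cutCrossings σ π i).trans_eq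
    (Equiv.sum_comp π (cutCrossings σ π))

end

/-- (Diaconis–Graham) For every two permutations `σ` and `π` of `{1,…,n}`,
`K(σ,π) ≤ S(σ,π) ≤ 2 K(σ,π)`. -/
theorem diaconis_graham (n : ℕ) (σ π : Equiv.Perm (Fin n)) :
    kendall σ π ≤ footrule σ π ∧ footrule σ π ≤ 2 * kendall σ π := by
  have hsum := footrule_add_two_mul_sum_min σ π
  have hmin := sum_min_discordantAfter_le σ π
  have hcut := footrule_eq_two_mul_sum_cutCrossings σ π
  omega
end

section
/- Let σ be a permutation of {1,…,n}, let w : {1,…,n} → ℝ be a weight function with w(i) > 0 for all i, let 1 ≤ x < n, and let a = σ⁻¹(x) and b = σ⁻¹(x+1) be the elements occupying ranks x and x+1, with a < b. Let σ' be the permutation obtained from σ by interchanging the ranks of a and b (i.e. σ' = (x x+1)∘σ). Then the difference Δ = S_w(σ') − S_w(σ) satisfies: Δ = w(a) − w(b) if b ≤ x; Δ = w(b) − w(a) if a ≥ x+1; and Δ = w(a) + w(b) if a ≤ x and b ≥ x+1. In particular, in all cases Δ ≤ w(a) + w(b). -/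
open Finset

/-- Let `a` and `b` (with `a < b`) be the elements occupying ranks `x` and `x+1` in a
permutation `σ`, and let `σ' = (x x+1) ∘ σ` be obtained by interchanging their ranks.
Then `Δ = S_w(σ') - S_w(σ)` equals `w a - w b` if `b ≤ x`, equals `w b - w a` if
`a ≥ x+1`, equals `w a + w b` if `a ≤ x` and `b ≥ x+1`; in all cases `Δ ≤ w a + w b`. -/
theorem adjacent_swap_footrule_delta (n : ℕ) (σ : Equiv.Perm (Fin n)) (w : Fin n → ℝ)
    (hw : ∀ i, 0 < w i) (x : ℕ) (hx : x + 1 < n) (a b : Fin n)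
    (ha : a = σ⁻¹ ⟨x, Nat.lt_of_succ_lt hx⟩) (hb : b = σ⁻¹ ⟨x + 1, hx⟩) (hab : a < b) :
    ((b : ℕ) ≤ x →
      weightedFootrule w (Equiv.swap ⟨x, Nat.lt_of_succ_lt hx⟩ ⟨x + 1, hx⟩ * σ) -
        weightedFootrule w σ = w a - w b) ∧
    (x + 1 ≤ (a : ℕ) →
      weightedFootrule w (Equiv.swap ⟨x, Nat.lt_of_succ_lt hx⟩ ⟨x + 1, hx⟩ * σ) -
        weightedFootrule w σ = w b - w a) ∧
    ((a : ℕ) ≤ x ∧ x + 1 ≤ (b : ℕ) →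
      weightedFootrule w (Equiv.swap ⟨x, Nat.lt_of_succ_lt hx⟩ ⟨x + 1, hx⟩ * σ) -
        weightedFootrule w σ = w a + w b) ∧
    (weightedFootrule w (Equiv.swap ⟨x, Nat.lt_of_succ_lt hx⟩ ⟨x + 1, hx⟩ * σ) -
      weightedFootrule w σ ≤ w a + w b) := by
  set p : Fin n := ⟨x, Nat.lt_of_succ_lt hx⟩ with hp
  set q : Fin n := ⟨x + 1, hx⟩ with hq
  have hpq : p ≠ q := by simp [hp, hq, Fin.ext_iff]
  have hσa : σ a = p := by rw [ha]; simp
  have hσb : σ b = q := by rw [hb]; simp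
  have hab' : a ≠ b := ne_of_lt hab
  have hσ'a : (Equiv.swap p q * σ) a = q := by
    simp [Equiv.Perm.mul_apply, hσa]
  have hσ'b : (Equiv.swap p q * σ) b = p := by
    simp [Equiv.Perm.mul_apply, hσb]
  have hkey : ∀ i : Fin n, i ≠ a → i ≠ b → (Equiv.swap p q * σ) i = σ i := by
    intro i hia hib
    simp only [Equiv.Perm.mul_apply]
    apply Equiv.swap_apply_of_ne_of_ne
    · intro h; exact hia (by rw [ha, ← h]; simp)
    · intro h; exact hib (by rw [hb, ← h]; simp)
  -- the main identity
  have hΔ : weightedFootrule w (Equiv.swap p q * σ) - weightedFootrule w σ =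
      w a * (|((x + 1 : ℕ) : ℝ) - ((a : ℕ) : ℝ)| - |((x : ℕ) : ℝ) - ((a : ℕ) : ℝ)|) +
      w b * (|((x : ℕ) : ℝ) - ((b : ℕ) : ℝ)| - |((x + 1 : ℕ) : ℝ) - ((b : ℕ) : ℝ)|) := by
    unfold weightedFootrule
    rw [← Finset.sum_sub_distrib]
    rw [← Finset.sum_subset (Finset.subset_univ ({a, b} : Finset (Fin n)))]
    · rw [Finset.sum_pair hab']
      rw [hσ'a, hσ'b, hσa, hσb]
      simp only [hp, hq]
      ring
    · intro i _ hi
      simp only [Finset.mem_insert, Finset.mem_singleton, not_or] at hi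
      rw [hkey i hi.1 hi.2]
      ring
  have haxb : (a : ℕ) < (b : ℕ) := hab
  push_cast at hΔ
  have part1 : (b : ℕ) ≤ x →
      weightedFootrule w (Equiv.swap p q * σ) - weightedFootrule w σ = w a - w b := by
    intro hbx
    have h1 : ((a : ℕ) : ℝ) < ((x : ℕ) : ℝ) := by
      exact_mod_cast lt_of_lt_of_le haxb hbx
    have h2 : ((b : ℕ) : ℝ) ≤ ((x : ℕ) : ℝ) := by exact_mod_cast hbx
    rw [hΔ, abs_of_nonneg (by linarith), abs_of_nonneg (by linarith),
      abs_of_nonneg (by linarith), abs_of_nonneg (by linarith)]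
    ring
  have part2 : x + 1 ≤ (a : ℕ) →
      weightedFootrule w (Equiv.swap p q * σ) - weightedFootrule w σ = w b - w a := by
    intro hax
    have h1 : ((x : ℕ) : ℝ) + 1 ≤ ((a : ℕ) : ℝ) := by exact_mod_cast hax
    have h2 : ((a : ℕ) : ℝ) < ((b : ℕ) : ℝ) := by exact_mod_cast haxb
    rw [hΔ, abs_of_nonpos (by linarith), abs_of_nonpos (by linarith),
      abs_of_nonpos (by linarith), abs_of_nonpos (by linarith)]
    ring
  have part3 : (a : ℕ) ≤ x ∧ x + 1 ≤ (b : ℕ) →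
      weightedFootrule w (Equiv.swap p q * σ) - weightedFootrule w σ = w a + w b := by
    rintro ⟨hax, hbx⟩
    have h1 : ((a : ℕ) : ℝ) ≤ ((x : ℕ) : ℝ) := by exact_mod_cast hax
    have h2 : ((x : ℕ) : ℝ) + 1 ≤ ((b : ℕ) : ℝ) := by exact_mod_cast hbx
    rw [hΔ, abs_of_nonneg (by linarith), abs_of_nonneg (by linarith),
      abs_of_nonpos (by linarith), abs_of_nonpos (by linarith)]
    ring
  refine ⟨part1, part2, part3, ?_⟩
  have hwa := hw a
  have hwb := hw b
  rcases le_or_gt (b : ℕ) x with hbx | hbx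
  · rw [part1 hbx]; linarith
  · rcases le_or_gt (x + 1) (a : ℕ) with hax | hax
    · rw [part2 hax]; linarith
    · rw [part3 ⟨Nat.lt_succ_iff.mp hax, hbx⟩]
end
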